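/- Let q > 1 and C₀ ≥ 0 be real numbers, let R₂ > 0, let u, v : (0,R₂] → (0,∞) be continuous with v nondecreasing, and let Λ : (0,R₂] → [0,∞) be nondecreasing. Assume that for all 0 < t ≤ s ≤ R₂: u(s)·v(t) − u(t)·v(s) ≤ C₀·Λ(s)·s^{1/q}·v(s)·(∫_t^s u(τ) dτ)^{1−1/q}. Then for all 0 < r₁ ≤ r₂ < R₁ ≤ R₂: (∫_{r₂}^{R₂} u / ∫_{r₂}^{R₂} v)^{1/q} − (∫_{r₁}^{R₁} u / ∫_{r₁}^{R₁} v)^{1/q} ≤ (C₀/q)·Λ(R₂)·( ∫_{R₁}^{R₂} v(t)·(t/∫_{r₂}^{t} v)^{(q+1)/q} dt + v(R₁)·∫_{r₁}^{r₂} (R₁/∫_{t}^{R₁} v)^{(q+1)/q} dt ). -/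

import Mathlib

/-!
Write `ρ(a, b) = (∫_a^b u / ∫_a^b v)^{1/q}` and split
`ρ(r₂, R₂) - ρ(r₁, R₁) = (ρ(r₂, R₂) - ρ(r₂, R₁)) + (ρ(r₂, R₁) - ρ(r₁, R₁))`.
Each bracket is bounded by integrating the derivative of `ρ` in its moving endpoint `x`. By the
chain rule that derivative is `(1/q) ρ^{1-q}` times the Wronskian `u(x) ∫v - v(x) ∫u` divided by
`(∫v)²`. The Wronskian is the integral of the left-hand side of the hypothesis over an interval of
length at most `x`, hence at most `C₀ Λ(R₂) V · x^{(q+1)/q} (∫u)^{1-1/q}`, with `V = v(x)` when the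
outer radius moves and, by monotonicity of `v`, `V = v(R₁)` when the inner one does. The powers of
`∫u` cancel against `ρ^{1-q}`, which leaves exactly the integrands on the right-hand side.
-/

open Set MeasureTheory intervalIntegral Real

section Primitive

variable {f : ℝ → ℝ} {a b c : ℝ}

theorem continuousOn_primitive_of_continuousOn (hf : ContinuousOn f (Icc a b))
    (hc : c ∈ Icc a b) : ContinuousOn (fun y => ∫ t in c..y, f t) (Icc a b) := by
  have hab : a ≤ b := hc.1.trans hc.2
  rw [← uIcc_of_le hab] at hf hc ⊢
  exact continuousOn_primitive_interval' hf.intervalIntegrable hc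

theorem continuousOn_primitive_left_of_continuousOn (hf : ContinuousOn f (Icc a b))
    (hc : c ∈ Icc a b) : ContinuousOn (fun y => ∫ t in y..c, f t) (Icc a b) := by
  simp only [integral_symm c]
  exact (continuousOn_primitive_of_continuousOn hf hc).neg

theorem hasDerivAt_primitive_of_continuousOn (hf : ContinuousOn f (Icc a b))
    (hc : c ∈ Icc a b) {x : ℝ} (hx : x ∈ Ioo a b) :
    HasDerivAt (fun y => ∫ t in c..y, f t) (f x) x :=
  integral_hasDerivAt_right
    (hf.mono (uIcc_subset_Icc hc (Ioo_subset_Icc_self hx))).intervalIntegrable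
    ((hf.mono Ioo_subset_Icc_self).stronglyMeasurableAtFilter isOpen_Ioo x hx)
    (hf.continuousAt (Icc_mem_nhds hx.1 hx.2))

theorem hasDerivAt_primitive_left_of_continuousOn (hf : ContinuousOn f (Icc a b))
    (hc : c ∈ Icc a b) {x : ℝ} (hx : x ∈ Ioo a b) :
    HasDerivAt (fun y => ∫ t in y..c, f t) (-f x) x := by
  simp only [integral_symm c]
  exact (hasDerivAt_primitive_of_continuousOn hf hc hx).neg

end Primitive

theorem mul_integral_sub_mul_integral_le {f g : ℝ → ℝ} {a b α β K : ℝ} (hab : a ≤ b)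
    (hf : IntervalIntegrable f volume a b) (hg : IntervalIntegrable g volume a b)
    (h : ∀ t ∈ Icc a b, α * f t - β * g t ≤ K) :
    α * (∫ t in a..b, f t) - β * ∫ t in a..b, g t ≤ (b - a) * K := by
  rw [← intervalIntegral.integral_const_mul, ← intervalIntegral.integral_const_mul,
    ← integral_sub (hf.const_mul α) (hg.const_mul β),
    ← smul_eq_mul, ← intervalIntegral.integral_const]
  exact integral_mono_on hab ((hf.const_mul α).sub (hg.const_mul β)) intervalIntegrable_const h

theorem rpow_add_one_div_eq_mul {x q : ℝ} (hx : 0 ≤ x) (hq : 0 < q) :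
    x ^ ((q + 1) / q) = x * x ^ (1 / q) := by
  rw [show (q + 1) / q = 1 + 1 / q by field_simp, rpow_add' hx (by positivity), rpow_one]

theorem div_sq_mul_rpow_div_le {q c w A B D : ℝ} (hq : 0 < q) (hw : 0 ≤ w) (hA : 0 < A)
    (hB : 0 < B) (hD : D ≤ c * w ^ ((q + 1) / q) * A ^ (1 - 1 / q)) :
    D / B ^ 2 * (1 / q) * (A / B) ^ (1 / q - 1) ≤ c / q * (w / B) ^ ((q + 1) / q) := by
  have hA_cancel : A ^ (1 - 1 / q) * A ^ (1 / q - 1) = 1 := by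
    rw [← rpow_add hA]; norm_num
  have hB_exp : B ^ (1 - 1 / q) / B ^ 2 = (B ^ ((q + 1) / q))⁻¹ := by
    rw [← rpow_natCast B 2, ← rpow_sub hB,
      show (1 - 1 / q - (2 : ℕ) : ℝ) = -((q + 1) / q) by push_cast; field_simp; ring,
      rpow_neg hB.le]
  calc D / B ^ 2 * (1 / q) * (A / B) ^ (1 / q - 1)
      ≤ c * w ^ ((q + 1) / q) * A ^ (1 - 1 / q) / B ^ 2 * (1 / q) * (A / B) ^ (1 / q - 1) := by
        gcongr
    _ = c / q * w ^ ((q + 1) / q) * (A ^ (1 - 1 / q) * A ^ (1 / q - 1))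
          * (B ^ (1 - 1 / q) / B ^ 2) := by
        rw [div_rpow hA.le hB.le, div_eq_mul_inv (A ^ _), ← rpow_neg hB.le, neg_sub]; ring
    _ = c / q * (w / B) ^ ((q + 1) / q) := by
        rw [hA_cancel, hB_exp, div_rpow hw hB.le]; ring

theorem rpow_div_sub_le_integral {q a b : ℝ} {A B A' B' c w : ℝ → ℝ} (hq : 0 < q) (hab : a ≤ b)
    (hA : ContinuousOn A (Icc a b)) (hB : ContinuousOn B (Icc a b))
    (hApos : ∀ x ∈ Icc a b, 0 < A x) (hBpos : ∀ x ∈ Icc a b, 0 < B x)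
    (hA' : ∀ x ∈ Ioo a b, HasDerivAt A (A' x) x) (hB' : ∀ x ∈ Ioo a b, HasDerivAt B (B' x) x)
    (hw : ∀ x ∈ Ioo a b, 0 ≤ w x)
    (hD : ∀ x ∈ Ioo a b,
      A' x * B x - A x * B' x ≤ c x * w x ^ ((q + 1) / q) * A x ^ (1 - 1 / q))
    (hint : IntegrableOn (fun x => c x / q * (w x / B x) ^ ((q + 1) / q)) (Icc a b)) :
    (A b / B b) ^ (1 / q) - (A a / B a) ^ (1 / q)
      ≤ ∫ x in a..b, c x / q * (w x / B x) ^ ((q + 1) / q) := by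
  have hratio_pos : ∀ x ∈ Icc a b, 0 < A x / B x := fun x hx => div_pos (hApos x hx) (hBpos x hx)
  refine sub_le_integral_of_hasDeriv_right_of_le (g' := fun x =>
      (A' x * B x - A x * B' x) / B x ^ 2 * (1 / q) * (A x / B x) ^ (1 / q - 1)) hab
    ((hA.div hB fun x hx => (hBpos x hx).ne').rpow_const fun x hx => Or.inl (hratio_pos x hx).ne')
    (fun x hx => ?_) hint (fun x hx => ?_)
  · have hx' := Ioo_subset_Icc_self hx
    exact ((((hA' x hx).div (hB' x hx) (hBpos x hx').ne').rpow_const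
      (Or.inl (hratio_pos x hx').ne')).hasDerivWithinAt)
  · have hx' := Ioo_subset_Icc_self hx
    exact div_sq_mul_rpow_div_le hq (hw x hx) (hApos x hx') (hBpos x hx') (hD x hx)

theorem integral_pos_of_continuousOn {f : ℝ → ℝ} {a b : ℝ} (hf : ContinuousOn f (Icc a b))
    (hpos : ∀ t ∈ Icc a b, 0 < f t) (hab : a < b) : 0 < ∫ t in a..b, f t :=
  intervalIntegral_pos_of_pos_on (hf.intervalIntegrable_of_Icc hab.le)
    (fun t ht => hpos t (Ioo_subset_Icc_self ht)) hab

section Wronskian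

variable {q L a b : ℝ} {u v : ℝ → ℝ}

theorem mul_integral_sub_integral_mul_le (hq : 1 ≤ q) (hL : 0 ≤ L) (ha : 0 ≤ a) (hab : a ≤ b)
    (hu : ContinuousOn u (Icc a b)) (hv : ContinuousOn v (Icc a b))
    (hu0 : ∀ t ∈ Icc a b, 0 ≤ u t) (hvb : 0 ≤ v b)
    (hratio : ∀ t ∈ Icc a b,
      u b * v t - u t * v b ≤ L * b ^ (1 / q) * v b * (∫ τ in t..b, u τ) ^ (1 - 1 / q)) :
    u b * (∫ t in a..b, v t) - (∫ t in a..b, u t) * v b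
      ≤ L * v b * b ^ ((q + 1) / q) * (∫ t in a..b, u t) ^ (1 - 1 / q) := by
  have hq0 : 0 < q := zero_lt_one.trans_le hq
  have hexp : 0 ≤ 1 - 1 / q := by rw [sub_nonneg, div_le_one hq0]; exact hq
  have huI : IntervalIntegrable u volume a b := hu.intervalIntegrable_of_Icc hab
  set K := L * b ^ (1 / q) * v b * (∫ τ in a..b, u τ) ^ (1 - 1 / q) with hK
  have hb : 0 ≤ b := ha.trans hab
  have hK0 : 0 ≤ K := by
    have := integral_nonneg (μ := volume) hab hu0
    positivity
  have hpt : ∀ t ∈ Icc a b, u b * v t - v b * u t ≤ K := fun t ht => calc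
    u b * v t - v b * u t = u b * v t - u t * v b := by ring
    _ ≤ L * b ^ (1 / q) * v b * (∫ τ in t..b, u τ) ^ (1 - 1 / q) := hratio t ht
    _ ≤ K := by
      rw [hK]
      have := integral_nonneg (μ := volume) ht.2 fun x hx => hu0 x ⟨ht.1.trans hx.1, hx.2⟩
      gcongr
      exact integral_mono_interval ht.1 ht.2 le_rfl
        (ae_restrict_of_forall_mem measurableSet_Ioc fun x hx => hu0 x (Ioc_subset_Icc_self hx))
        huI
  calc u b * (∫ t in a..b, v t) - (∫ t in a..b, u t) * v b
      = u b * (∫ t in a..b, v t) - v b * ∫ t in a..b, u t := by ring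
    _ ≤ (b - a) * K :=
      mul_integral_sub_mul_integral_le hab (hv.intervalIntegrable_of_Icc hab) huI hpt
    _ ≤ b * K := by gcongr; linarith
    _ = L * v b * b ^ ((q + 1) / q) * (∫ t in a..b, u t) ^ (1 - 1 / q) := by
      rw [hK, rpow_add_one_div_eq_mul hb hq0]; ring

theorem integral_mul_sub_mul_integral_le (hq : 1 ≤ q) (hL : 0 ≤ L) (ha : 0 ≤ a) (hab : a ≤ b)
    (hu : ContinuousOn u (Icc a b)) (hv : ContinuousOn v (Icc a b))
    (hu0 : ∀ t ∈ Icc a b, 0 ≤ u t) (hva : 0 ≤ v a) (hvmono : MonotoneOn v (Icc a b))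
    (hratio : ∀ s ∈ Icc a b,
      u s * v a - u a * v s ≤ L * s ^ (1 / q) * v s * (∫ τ in a..s, u τ) ^ (1 - 1 / q)) :
    (∫ t in a..b, u t) * v a - u a * ∫ t in a..b, v t
      ≤ L * v b * b ^ ((q + 1) / q) * (∫ t in a..b, u t) ^ (1 - 1 / q) := by
  have hq0 : 0 < q := zero_lt_one.trans_le hq
  have hexp : 0 ≤ 1 - 1 / q := by rw [sub_nonneg, div_le_one hq0]; exact hq
  have huI : IntervalIntegrable u volume a b := hu.intervalIntegrable_of_Icc hab
  have hv_le : ∀ s ∈ Icc a b, v a ≤ v s := fun s hs => hvmono (left_mem_Icc.2 hab) hs hs.1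
  have hb : 0 ≤ b := ha.trans hab
  have hvb : 0 ≤ v b := hva.trans (hv_le b (right_mem_Icc.2 hab))
  set K := L * b ^ (1 / q) * v b * (∫ τ in a..b, u τ) ^ (1 - 1 / q) with hK
  have hK0 : 0 ≤ K := by
    have := integral_nonneg (μ := volume) hab hu0
    positivity
  have hpt : ∀ s ∈ Icc a b, v a * u s - u a * v s ≤ K := fun s hs => calc
    v a * u s - u a * v s = u s * v a - u a * v s := by ring
    _ ≤ L * s ^ (1 / q) * v s * (∫ τ in a..s, u τ) ^ (1 - 1 / q) := hratio s hs
    _ ≤ K := by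
      rw [hK]
      have := integral_nonneg (μ := volume) hs.1 fun x hx => hu0 x ⟨hx.1, hx.2.trans hs.2⟩
      have := hva.trans (hv_le s hs)
      have := ha.trans hs.1
      gcongr
      · exact hs.2
      · exact hvmono hs (right_mem_Icc.2 hab) hs.2
      · exact integral_mono_interval le_rfl hs.1 hs.2
          (ae_restrict_of_forall_mem measurableSet_Ioc fun x hx => hu0 x (Ioc_subset_Icc_self hx))
          huI
  calc (∫ t in a..b, u t) * v a - u a * ∫ t in a..b, v t
      = v a * (∫ t in a..b, u t) - u a * ∫ t in a..b, v t := by ring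
    _ ≤ (b - a) * K :=
      mul_integral_sub_mul_integral_le hab huI (hv.intervalIntegrable_of_Icc hab) hpt
    _ ≤ b * K := by gcongr; linarith
    _ = L * v b * b ^ ((q + 1) / q) * (∫ t in a..b, u t) ^ (1 - 1 / q) := by
      rw [hK, rpow_add_one_div_eq_mul hb hq0]; ring

end Wronskian

section AnnulusRatio

variable {q L a c b : ℝ} {u v : ℝ → ℝ}

theorem rpow_integral_div_sub_le_of_right (hq : 1 ≤ q) (hL : 0 ≤ L) (ha : 0 ≤ a) (hac : a < c)
    (hcb : c ≤ b) (hu : ContinuousOn u (Icc a b)) (hv : ContinuousOn v (Icc a b))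
    (hupos : ∀ t ∈ Icc a b, 0 < u t) (hvpos : ∀ t ∈ Icc a b, 0 < v t)
    (hratio : ∀ t s, a ≤ t → t ≤ s → s ≤ b →
      u s * v t - u t * v s ≤ L * s ^ (1 / q) * v s * (∫ τ in t..s, u τ) ^ (1 - 1 / q)) :
    ((∫ τ in a..b, u τ) / ∫ τ in a..b, v τ) ^ (1 / q)
        - ((∫ τ in a..c, u τ) / ∫ τ in a..c, v τ) ^ (1 / q)
      ≤ L / q * ∫ t in c..b, v t * (t / ∫ τ in a..t, v τ) ^ ((q + 1) / q) := by
  have hq0 : 0 < q := zero_lt_one.trans_le hq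
  have ha_mem : a ∈ Icc a b := left_mem_Icc.2 (hac.le.trans hcb)
  have hsub : Icc c b ⊆ Icc a b := Icc_subset_Icc_left hac.le
  have hsub_x : ∀ x ∈ Icc c b, Icc a x ⊆ Icc a b := fun x hx => Icc_subset_Icc_right hx.2
  have hB_pos : ∀ x ∈ Icc c b, 0 < ∫ τ in a..x, v τ := fun x hx =>
    integral_pos_of_continuousOn (hv.mono (hsub_x x hx)) (fun t ht => hvpos t (hsub_x x hx ht))
      (hac.trans_le hx.1)
  have hB_cont := (continuousOn_primitive_of_continuousOn hv ha_mem).mono hsub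
  have key := rpow_div_sub_le_integral (c := fun x => L * v x) (w := id) hq0 hcb
    ((continuousOn_primitive_of_continuousOn hu ha_mem).mono hsub) hB_cont
    (fun x hx => integral_pos_of_continuousOn (hu.mono (hsub_x x hx))
      (fun t ht => hupos t (hsub_x x hx ht)) (hac.trans_le hx.1)) hB_pos
    (fun x hx => hasDerivAt_primitive_of_continuousOn hu ha_mem (Ioo_subset_Ioo_left hac.le hx))
    (fun x hx => hasDerivAt_primitive_of_continuousOn hv ha_mem (Ioo_subset_Ioo_left hac.le hx))
    (fun x hx => ha.trans (hac.trans hx.1).le)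
    (fun x hx => by
      have hx' := hsub_x x (Ioo_subset_Icc_self hx)
      exact mul_integral_sub_integral_mul_le hq hL ha (hac.trans hx.1).le (hu.mono hx')
        (hv.mono hx') (fun t ht => (hupos t (hx' ht)).le)
        (hvpos x (hsub (Ioo_subset_Icc_self hx))).le (fun t ht => hratio t x ht.1 ht.2 hx.2.le))
    (ContinuousOn.integrableOn_Icc <|
      ((continuousOn_const.mul (hv.mono hsub)).div_const q).mul <|
        (continuousOn_id.div hB_cont fun x hx => (hB_pos x hx).ne').rpow_const
          fun x _ => Or.inr (by positivity))
  refine key.trans_eq ?_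
  rw [← intervalIntegral.integral_const_mul]
  exact integral_congr fun t _ => by simp only [id]; ring

theorem rpow_integral_div_sub_le_of_left (hq : 1 ≤ q) (hL : 0 ≤ L) (ha : 0 ≤ a) (hac : a ≤ c)
    (hcb : c < b) (hu : ContinuousOn u (Icc a b)) (hv : ContinuousOn v (Icc a b))
    (hupos : ∀ t ∈ Icc a b, 0 < u t) (hvpos : ∀ t ∈ Icc a b, 0 < v t)
    (hvmono : MonotoneOn v (Icc a b))
    (hratio : ∀ t s, a ≤ t → t ≤ s → s ≤ b →
      u s * v t - u t * v s ≤ L * s ^ (1 / q) * v s * (∫ τ in t..s, u τ) ^ (1 - 1 / q)) :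
    ((∫ τ in c..b, u τ) / ∫ τ in c..b, v τ) ^ (1 / q)
        - ((∫ τ in a..b, u τ) / ∫ τ in a..b, v τ) ^ (1 / q)
      ≤ L / q * (v b * ∫ t in a..c, (b / ∫ τ in t..b, v τ) ^ ((q + 1) / q)) := by
  have hq0 : 0 < q := zero_lt_one.trans_le hq
  have hb_mem : b ∈ Icc a b := right_mem_Icc.2 (hac.trans hcb.le)
  have hsub : Icc a c ⊆ Icc a b := Icc_subset_Icc_right hcb.le
  have hsub_x : ∀ x ∈ Icc a c, Icc x b ⊆ Icc a b := fun x hx => Icc_subset_Icc_left hx.1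
  have hB_pos : ∀ x ∈ Icc a c, 0 < ∫ τ in x..b, v τ := fun x hx =>
    integral_pos_of_continuousOn (hv.mono (hsub_x x hx)) (fun t ht => hvpos t (hsub_x x hx ht))
      (hx.2.trans_lt hcb)
  have hB_cont := (continuousOn_primitive_left_of_continuousOn hv hb_mem).mono hsub
  have key := rpow_div_sub_le_integral (c := fun _ => L * v b) (w := fun _ => b) hq0 hac
    ((continuousOn_primitive_left_of_continuousOn hu hb_mem).mono hsub) hB_cont
    (fun x hx => integral_pos_of_continuousOn (hu.mono (hsub_x x hx))
      (fun t ht => hupos t (hsub_x x hx ht)) (hx.2.trans_lt hcb)) hB_pos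
    (fun x hx => hasDerivAt_primitive_left_of_continuousOn hu hb_mem
      (Ioo_subset_Ioo_right hcb.le hx))
    (fun x hx => hasDerivAt_primitive_left_of_continuousOn hv hb_mem
      (Ioo_subset_Ioo_right hcb.le hx))
    (fun _ _ => ha.trans (hac.trans hcb.le))
    (fun x hx => by
      have hx' := hsub_x x (Ioo_subset_Icc_self hx)
      have := integral_mul_sub_mul_integral_le hq hL (ha.trans hx.1.le)
        (hx.2.trans hcb).le (hu.mono hx') (hv.mono hx') (fun t ht => (hupos t (hx' ht)).le)
        (hvpos x (hsub (Ioo_subset_Icc_self hx))).le (hvmono.mono hx')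
        (fun s hs => hratio x s hx.1.le hs.1 hs.2)
      linarith)
    (ContinuousOn.integrableOn_Icc <| continuousOn_const.mul <|
      (continuousOn_const.div hB_cont fun x hx => (hB_pos x hx).ne').rpow_const
        fun x _ => Or.inr (by positivity))
  refine key.trans_eq ?_
  rw [intervalIntegral.integral_const_mul]
  ring

end AnnulusRatio

theorem stmt_14_general (q C₀ R₂ : ℝ) (hq : 1 < q) (hC₀ : 0 ≤ C₀)
    (u v Λ : ℝ → ℝ)
    (hu : ContinuousOn u (Set.Ioc 0 R₂))
    (hupos : ∀ t ∈ Set.Ioc 0 R₂, 0 < u t)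
    (hv : ContinuousOn v (Set.Ioc 0 R₂))
    (hvpos : ∀ t ∈ Set.Ioc 0 R₂, 0 < v t)
    (hvmono : MonotoneOn v (Set.Ioc 0 R₂))
    (hΛnn : ∀ t ∈ Set.Ioc 0 R₂, 0 ≤ Λ t)
    (hΛmono : MonotoneOn Λ (Set.Ioc 0 R₂))
    (hratio : ∀ t s : ℝ, 0 < t → t ≤ s → s ≤ R₂ →
      u s * v t - u t * v s
        ≤ C₀ * Λ s * s ^ (1 / q) * v s * (∫ τ in t..s, u τ) ^ (1 - 1 / q)) :
    ∀ r₁ r₂ R₁ : ℝ, 0 < r₁ → r₁ ≤ r₂ → r₂ < R₁ → R₁ ≤ R₂ →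
      ((∫ τ in r₂..R₂, u τ) / ∫ τ in r₂..R₂, v τ) ^ (1 / q)
          - ((∫ τ in r₁..R₁, u τ) / ∫ τ in r₁..R₁, v τ) ^ (1 / q)
        ≤ C₀ / q * Λ R₂
          * ((∫ t in R₁..R₂, v t * (t / ∫ τ in r₂..t, v τ) ^ ((q + 1) / q))
            + v R₁ * ∫ t in r₁..r₂, (R₁ / ∫ τ in t..R₁, v τ) ^ ((q + 1) / q)) := by
  intro r₁ r₂ R₁ hr₁ hr₁₂ hr₂R₁ hR₁₂
  have hr₂ : 0 < r₂ := hr₁.trans_le hr₁₂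
  have hsub : ∀ {a b : ℝ}, 0 < a → b ≤ R₂ → Icc a b ⊆ Ioc 0 R₂ :=
    fun ha hb x hx => ⟨ha.trans_le hx.1, hx.2.trans hb⟩
  have hR₂ : R₂ ∈ Ioc 0 R₂ := ⟨hr₂.trans (hr₂R₁.trans_le hR₁₂), le_rfl⟩
  have hL : 0 ≤ C₀ * Λ R₂ := mul_nonneg hC₀ (hΛnn R₂ hR₂)
  have hratio_L : ∀ t s : ℝ, 0 < t → t ≤ s → s ≤ R₂ → u s * v t - u t * v s
      ≤ C₀ * Λ R₂ * s ^ (1 / q) * v s * (∫ τ in t..s, u τ) ^ (1 - 1 / q) := by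
    intro t s ht hts hsR
    have hs : s ∈ Ioc 0 R₂ := ⟨ht.trans_le hts, hsR⟩
    have := integral_nonneg (μ := volume) hts fun x hx => (hupos x (hsub ht hsR hx)).le
    have := hvpos s hs
    have := hs.1
    refine (hratio t s ht hts hsR).trans ?_
    gcongr
    exact hΛmono hs hR₂ hsR
  have outer := rpow_integral_div_sub_le_of_right hq.le hL hr₂.le hr₂R₁ hR₁₂
    (hu.mono (hsub hr₂ le_rfl)) (hv.mono (hsub hr₂ le_rfl))
    (fun t ht => hupos t (hsub hr₂ le_rfl ht)) (fun t ht => hvpos t (hsub hr₂ le_rfl ht))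
    (fun t s ht hts hsR => hratio_L t s (hr₂.trans_le ht) hts hsR)
  have inner := rpow_integral_div_sub_le_of_left hq.le hL hr₁.le hr₁₂ hr₂R₁
    (hu.mono (hsub hr₁ hR₁₂)) (hv.mono (hsub hr₁ hR₁₂))
    (fun t ht => hupos t (hsub hr₁ hR₁₂ ht)) (fun t ht => hvpos t (hsub hr₁ hR₁₂ ht))
    (hvmono.mono (hsub hr₁ hR₁₂))
    (fun t s ht hts hsR => hratio_L t s (hr₁.trans_le ht) hts (hsR.trans hR₁₂))
  calc _ ≤ C₀ * Λ R₂ / q * (∫ t in R₁..R₂, v t * (t / ∫ τ in r₂..t, v τ) ^ ((q + 1) / q))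
        + C₀ * Λ R₂ / q * (v R₁ * ∫ t in r₁..r₂, (R₁ / ∫ τ in t..R₁, v τ) ^ ((q + 1) / q)) := by
        linarith
    _ = _ := by ring

/-- Analytic core of Theorem 1.4 (relative volume comparison for annuli). -/
theorem stmt_14 (q C₀ R₂ : ℝ) (hq : 1 < q) (hC₀ : 0 ≤ C₀) (hR₂ : 0 < R₂)
    (u v Λ : ℝ → ℝ)
    (hu : ContinuousOn u (Set.Ioc 0 R₂))
    (hupos : ∀ t ∈ Set.Ioc 0 R₂, 0 < u t)
    (hv : ContinuousOn v (Set.Ioc 0 R₂))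
    (hvpos : ∀ t ∈ Set.Ioc 0 R₂, 0 < v t)
    (hvmono : MonotoneOn v (Set.Ioc 0 R₂))
    (hΛnn : ∀ t ∈ Set.Ioc 0 R₂, 0 ≤ Λ t)
    (hΛmono : MonotoneOn Λ (Set.Ioc 0 R₂))
    (hratio : ∀ t s : ℝ, 0 < t → t ≤ s → s ≤ R₂ →
      u s * v t - u t * v s
        ≤ C₀ * Λ s * s ^ (1 / q) * v s * (∫ τ in t..s, u τ) ^ (1 - 1 / q)) :
    ∀ r₁ r₂ R₁ : ℝ, 0 < r₁ → r₁ ≤ r₂ → r₂ < R₁ → R₁ ≤ R₂ →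
      ((∫ τ in r₂..R₂, u τ) / ∫ τ in r₂..R₂, v τ) ^ (1 / q)
          - ((∫ τ in r₁..R₁, u τ) / ∫ τ in r₁..R₁, v τ) ^ (1 / q)
        ≤ C₀ / q * Λ R₂
          * ((∫ t in R₁..R₂, v t * (t / ∫ τ in r₂..t, v τ) ^ ((q + 1) / q))
            + v R₁ * ∫ t in r₁..r₂, (R₁ / ∫ τ in t..R₁, v τ) ^ ((q + 1) / q)) :=
  stmt_14_general q C₀ R₂ hq hC₀ u v Λ hu hupos hv hvpos hvmono hΛnn hΛmono hratio
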